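/- Let $\mathcal{L}$ be a sufficiently generic distraction matrix in $P = K[x_1,\dots,x_n]$, and let $I$ be a strongly stable monomial ideal. Then the initial ideal of $D_{\mathcal{L}}(I)$ with respect to the degree reverse lexicographic order equals $I$: $\mathrm{in}_{\mathrm{DegRevLex}}(D_{\mathcal{L}}(I)) = I$. -/

import Mathlib

open MvPolynomial

noncomputable section
/-- A distraction matrix: a family of linear forms `L i j` (`1 ≤ i ≤ n`, `j ∈ ℕ`) such that
every selection `L 1 j₁, …, L n jₙ` spans the space of linear forms, and every row is
eventually constant. -/
def IsDistractionMatrix (n : ℕ) (K : Type*) [Field K]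
    (L : Fin n → ℕ → MvPolynomial (Fin n) K) : Prop :=
  (∀ i j, (L i j).IsHomogeneous 1) ∧
  (∀ js : Fin n → ℕ, ∀ k : Fin n,
      (X k : MvPolynomial (Fin n) K) ∈
        Submodule.span K (Set.range fun i => L i (js i))) ∧
  (∃ N : ℕ, ∀ i : Fin n, ∀ j : ℕ, N < j → L i j = L i N)

/-- The distraction of the monomial `x^d`: `∏ i ∏_{j=1}^{d i} L i j`. -/
def distrMon (n : ℕ) (K : Type*) [Field K]
    (L : Fin n → ℕ → MvPolynomial (Fin n) K) (d : Fin n →₀ ℕ) :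
    MvPolynomial (Fin n) K :=
  ∏ i, ∏ j ∈ Finset.range (d i), L i (j + 1)

/-- The distraction operator `D_L`, extended `K`-linearly from monomials to all of `P`. -/
def distr (n : ℕ) (K : Type*) [Field K]
    (L : Fin n → ℕ → MvPolynomial (Fin n) K) (f : MvPolynomial (Fin n) K) :
    MvPolynomial (Fin n) K :=
  ∑ d ∈ f.support, coeff d f • distrMon n K L d
/-- The distraction of an ideal: the ideal generated by the distractions of its elements. -/
def distrIdeal (n : ℕ) (K : Type*) [Field K]
    (L : Fin n → ℕ → MvPolynomial (Fin n) K) (I : Ideal (MvPolynomial (Fin n) K)) :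
    Ideal (MvPolynomial (Fin n) K) :=
  Ideal.span (distr n K L '' I)

/-- The saturation `J : M^∞` of an ideal with respect to the irrelevant maximal ideal
`M = (x_1,…,x_n)`. -/
def satIdeal (n : ℕ) (K : Type*) [Field K] (J : Ideal (MvPolynomial (Fin n) K)) :
    Ideal (MvPolynomial (Fin n) K) :=
  ⨆ r : ℕ, Submodule.colon J
    (((Ideal.span (Set.range (X : Fin n → MvPolynomial (Fin n) K)) ^ r).restrictScalars
      (MvPolynomial (Fin n) K) : Set (MvPolynomial (Fin n) K)))
/-- The strongly stable exchange property. -/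
def StronglyStableMoves (n : ℕ) (K : Type*) [Field K]
    (I : Ideal (MvPolynomial (Fin n) K)) : Prop :=
  ∀ d : Fin n →₀ ℕ, monomial d (1 : K) ∈ I →
    ∀ i j : Fin n, i ≤ j → d j ≠ 0 →
      monomial (d - Finsupp.single j 1 + Finsupp.single i 1) (1 : K) ∈ I
/-- The degree reverse lexicographic order (with `x_1 > x_2 > ⋯ > x_n`) on exponent
vectors: `d < e` iff `deg d < deg e`, or the degrees agree and at the last index where
they differ, `d` has the larger exponent. -/
def drlLT (n : ℕ) (d e : Fin n →₀ ℕ) : Prop :=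
  (∑ i, d i) < (∑ i, e i) ∨
    ((∑ i, d i) = (∑ i, e i) ∧
      ∃ k : Fin n, e k < d k ∧ ∀ j : Fin n, k < j → d j = e j)

/-- The initial ideal of `I` with respect to DegRevLex: the ideal generated by the
leading monomials of the nonzero elements of `I`. -/
def inDRL (n : ℕ) (K : Type*) [Field K] (I : Ideal (MvPolynomial (Fin n) K)) :
    Ideal (MvPolynomial (Fin n) K) :=
  Ideal.span {p | ∃ f ∈ I, f ≠ 0 ∧ ∃ d : Fin n →₀ ℕ, p = monomial d (1 : K) ∧
    coeff d f ≠ 0 ∧ ∀ e : Fin n →₀ ℕ, coeff e f ≠ 0 → e = d ∨ drlLT n e d}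

/-- A monomial ideal: an ideal generated by monomials. -/
def IsMonomialIdeal (n : ℕ) (K : Type*) [Field K]
    (I : Ideal (MvPolynomial (Fin n) K)) : Prop :=
  ∃ S : Set (Fin n →₀ ℕ), I = Ideal.span ((fun d => monomial d (1 : K)) '' S)

/-- A sufficiently generic distraction matrix: in addition,
`⟨L_{1 j_1},…,L_{k j_k}, x_{k+1},…,x_n⟩ = P_1` for every `k` and all choices of indices. -/
def IsSuffGenericDistraction (n : ℕ) (K : Type*) [Field K]
    (L : Fin n → ℕ → MvPolynomial (Fin n) K) : Prop :=
  IsDistractionMatrix n K L ∧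
  ∀ k : ℕ, k ≤ n → ∀ js : Fin n → ℕ, ∀ v : Fin n,
    (X v : MvPolynomial (Fin n) K) ∈
      Submodule.span K ({p | ∃ i : Fin n, (i : ℕ) < k ∧ p = L i (js i)} ∪
        {p | ∃ i : Fin n, k ≤ (i : ℕ) ∧ p = X i})

namespace DistrAux

variable {n : ℕ} {K : Type*} [Field K]

/-- degree of an exponent vector -/
abbrev degE (m : Fin n →₀ ℕ) : ℕ := ∑ v, m v

lemma degE_add (a b : Fin n →₀ ℕ) : degE (a + b) = degE a + degE b := by
  simp [degE, Finsupp.add_apply, Finset.sum_add_distrib]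

lemma degE_single (i : Fin n) : degE (Finsupp.single i 1) = 1 := by
  simp [degE, Finsupp.single_apply]

lemma drlLT_irrefl (d : Fin n →₀ ℕ) : ¬ drlLT n d d := by
  rintro (h | ⟨-, k, hk, -⟩)
  · exact lt_irrefl _ h
  · exact lt_irrefl _ hk

lemma drlLT_trans {a b c : Fin n →₀ ℕ} (h1 : drlLT n a b) (h2 : drlLT n b c) :
    drlLT n a c := by
  rcases h1 with h1 | ⟨e1, k1, hk1, ha1⟩
  · rcases h2 with h2 | ⟨e2, -⟩
    · exact Or.inl (h1.trans h2)
    · exact Or.inl (e2 ▸ h1)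
  · rcases h2 with h2 | ⟨e2, k2, hk2, ha2⟩
    · exact Or.inl (e1 ▸ h2)
    · refine Or.inr ⟨e1.trans e2, ?_⟩
      rcases lt_trichotomy k1 k2 with h | h | h
      · exact ⟨k2, by rw [ha1 k2 h]; exact hk2,
          fun j hj => (ha1 j (h.trans hj)).trans (ha2 j hj)⟩
      · subst h
        exact ⟨k1, hk2.trans hk1, fun j hj => (ha1 j hj).trans (ha2 j hj)⟩
      · exact ⟨k1, by rw [← ha2 k1 h]; exact hk1,
          fun j hj => (ha1 j hj).trans (ha2 j (h.trans hj))⟩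

lemma drlLT_asymm {a b : Fin n →₀ ℕ} (h1 : drlLT n a b) (h2 : drlLT n b a) : False :=
  drlLT_irrefl a (drlLT_trans h1 h2)

lemma drlLT_total {a b : Fin n →₀ ℕ} (hd : degE a = degE b) (hne : a ≠ b) :
    drlLT n a b ∨ drlLT n b a := by
  classical
  have hT : (Finset.univ.filter (fun j : Fin n => a j ≠ b j)).Nonempty := by
    by_contra h
    rw [Finset.not_nonempty_iff_eq_empty, Finset.filter_eq_empty_iff] at h
    exact hne (Finsupp.ext fun v => by
      have := h (Finset.mem_univ v); simpa using this)
  set T := Finset.univ.filter (fun j : Fin n => a j ≠ b j) with hTdef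
  have hkT := T.max'_mem hT
  set k := T.max' hT with hk
  have hkne : a k ≠ b k := by
    have := hkT; rw [hTdef, Finset.mem_filter] at this; exact this.2
  have htail : ∀ j : Fin n, k < j → a j = b j := by
    intro j hj
    by_contra hc
    have : j ∈ T := by rw [hTdef, Finset.mem_filter]; exact ⟨Finset.mem_univ _, hc⟩
    exact absurd (T.le_max' j this) (not_le.mpr hj)
  rcases lt_or_gt_of_ne hkne with h | h
  · exact Or.inr (Or.inr ⟨hd.symm, k, h, fun j hj => (htail j hj).symm⟩)
  · exact Or.inl (Or.inr ⟨hd, k, h, htail⟩)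

lemma drlLT_add_right {a b : Fin n →₀ ℕ} (c : Fin n →₀ ℕ) (h : drlLT n a b) :
    drlLT n (a + c) (b + c) := by
  have hsum : ∀ x : Fin n →₀ ℕ, (∑ i, (x + c) i) = (∑ i, x i) + ∑ i, c i := by
    intro x; simp [Finsupp.add_apply, Finset.sum_add_distrib]
  rcases h with h | ⟨he, k, hk, ht⟩
  · exact Or.inl (by rw [hsum, hsum]; omega)
  · refine Or.inr ⟨by rw [hsum, hsum]; omega, k, ?_, fun j hj => ?_⟩
    · simp only [Finsupp.add_apply]; omega
    · simp only [Finsupp.add_apply]; rw [ht j hj]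

lemma drlLT_of_tail {m e : Fin n →₀ ℕ} (K0 : ℕ) (hdeg : degE e = degE m)
    (hm : ∀ v : Fin n, K0 ≤ ↑v → m v = 0) {v0 : Fin n} (hv0 : K0 ≤ ↑v0)
    (he : e v0 ≠ 0) : drlLT n e m := by
  have hv0s : v0 ∈ e.support := Finsupp.mem_support_iff.mpr he
  have hne : e.support.Nonempty := ⟨v0, hv0s⟩
  set j := e.support.max' hne with hj
  have hjs : j ∈ e.support := e.support.max'_mem hne
  have hv0j : v0 ≤ j := e.support.le_max' v0 hv0s
  have hK0j : K0 ≤ (j : ℕ) := le_trans hv0 hv0j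
  refine Or.inr ⟨hdeg, j, ?_, fun j' hj' => ?_⟩
  · rw [hm j hK0j]
    exact Nat.pos_of_ne_zero (Finsupp.mem_support_iff.mp hjs)
  · have h1 : e j' = 0 := by
      by_contra hc
      exact absurd (e.support.le_max' j' (Finsupp.mem_support_iff.mpr hc))
        (not_le.mpr hj')
    have h2 : m j' = 0 := hm j' (le_trans hK0j (le_of_lt hj'))
    rw [h1, h2]

lemma exists_drl_max (T : Finset (Fin n →₀ ℕ)) (h : T.Nonempty) :
    ∃ m ∈ T, ∀ t ∈ T, ¬ drlLT n m t := by
  classical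
  induction T using Finset.induction with
  | empty => exact absurd h Finset.not_nonempty_empty
  | @insert a s ha ih =>
    rcases s.eq_empty_or_nonempty with hs | hs
    · subst hs
      exact ⟨a, Finset.mem_insert_self a _, by
        intro t ht
        rw [Finset.mem_insert] at ht
        rcases ht with rfl | ht
        · exact drlLT_irrefl t
        · exact absurd ht (Finset.notMem_empty t)⟩
    · obtain ⟨m, hm, hmax⟩ := ih hs
      by_cases hc : drlLT n m a
      · refine ⟨a, Finset.mem_insert_self a s, ?_⟩
        intro t ht
        rw [Finset.mem_insert] at ht
        rcases ht with rfl | ht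
        · exact drlLT_irrefl t
        · intro hat
          exact hmax t ht (drlLT_trans hc hat)
      · refine ⟨m, Finset.mem_insert_of_mem hm, ?_⟩
        intro t ht
        rw [Finset.mem_insert] at ht
        rcases ht with rfl | ht
        · exact hc
        · exact hmax t ht

/-- leading monomial predicate -/
def IsLM (f : MvPolynomial (Fin n) K) (m : Fin n →₀ ℕ) : Prop :=
  coeff m f ≠ 0 ∧ ∀ e, coeff e f ≠ 0 → e = m ∨ drlLT n e m

lemma IsLM.unique {f : MvPolynomial (Fin n) K} {t t' : Fin n →₀ ℕ}
    (h : IsLM f t) (h' : IsLM f t') : t = t' := by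
  rcases h'.2 t h.1 with h1 | h1
  · exact h1
  · rcases h.2 t' h'.1 with h2 | h2
    · exact h2.symm
    · exact absurd h2 (fun hc => drlLT_asymm h1 hc)


section KillF

def killF (p : Fin n → Prop) [DecidablePred p] :
    MvPolynomial (Fin n) K →ₐ[K] MvPolynomial (Fin n) K :=
  aeval (fun i => if p i then 0 else X i)

lemma killF_monomial (p : Fin n → Prop) [DecidablePred p] (e : Fin n →₀ ℕ) (c : K) :
    killF p (monomial e c) =
      if (∀ i, p i → e i = 0) then monomial e c else 0 := by
  classical
  rw [killF, aeval_monomial]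
  by_cases h : ∀ i, p i → e i = 0
  · rw [if_pos h]
    have heq : (e.prod fun i k => (if p i then 0 else X i : MvPolynomial (Fin n) K) ^ k)
        = e.prod fun i k => (X i) ^ k := by
      apply Finsupp.prod_congr
      intro i hi
      have hnp : ¬ p i := fun hp => (Finsupp.mem_support_iff.mp hi) (h i hp)
      rw [if_neg hnp]
    rw [heq, monomial_eq, MvPolynomial.algebraMap_eq]
  · rw [if_neg h]
    push_neg at h
    obtain ⟨i, hpi, hei⟩ := h
    have hi : i ∈ e.support := Finsupp.mem_support_iff.mpr hei
    have hz : (e.prod fun i k => (if p i then 0 else X i : MvPolynomial (Fin n) K) ^ k) = 0 := by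
      rw [Finsupp.prod]
      apply Finset.prod_eq_zero hi
      rw [if_pos hpi, zero_pow hei]
    rw [hz, mul_zero]

lemma killF_coeff (p : Fin n → Prop) [DecidablePred p] (f : MvPolynomial (Fin n) K)
    (t : Fin n →₀ ℕ) :
    coeff t (killF p f) = if (∀ i, p i → t i = 0) then coeff t f else 0 := by
  classical
  induction f using MvPolynomial.induction_on' with
  | monomial e c =>
    rw [killF_monomial]
    by_cases hce : ∀ i, p i → e i = 0
    · rw [if_pos hce]
      by_cases hct : ∀ i, p i → t i = 0
      · rw [if_pos hct]
      · rw [if_neg hct, coeff_monomial]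
        have : e ≠ t := by rintro rfl; exact hct hce
        rw [if_neg this]
    · rw [if_neg hce, coeff_zero]
      by_cases hct : ∀ i, p i → t i = 0
      · rw [if_pos hct, coeff_monomial]
        have : e ≠ t := by rintro rfl; exact hce hct
        rw [if_neg this]
      · rw [if_neg hct]
  | add f g hf hg =>
    rw [map_add, coeff_add, hf, hg, coeff_add]
    split_ifs <;> ring

lemma killF_fix (p : Fin n → Prop) [DecidablePred p] (f : MvPolynomial (Fin n) K)
    (h : ∀ d ∈ f.support, ∀ i, p i → d i = 0) : killF p f = f := by
  ext t
  rw [killF_coeff]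
  by_cases ht : ∀ i, p i → t i = 0
  · rw [if_pos ht]
  · rw [if_neg ht]
    by_contra hc
    exact ht (h t (Finsupp.mem_support_iff.mpr (fun h0 => hc h0.symm)) )

lemma killF_X (p : Fin n → Prop) [DecidablePred p] {i : Fin n} (h : ¬ p i) :
    killF (K := K) p (X i) = X i := by
  simp [killF, h]

lemma killF_X0 (p : Fin n → Prop) [DecidablePred p] {i : Fin n} (h : p i) :
    killF (K := K) p (X i) = 0 := by
  simp [killF, h]

lemma mem_support_killF (p : Fin n → Prop) [DecidablePred p] {f : MvPolynomial (Fin n) K}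
    {d : Fin n →₀ ℕ} (hd : d ∈ (killF p f).support) :
    (∀ i, p i → d i = 0) ∧ d ∈ f.support := by
  rw [MvPolynomial.mem_support_iff] at hd
  rw [killF_coeff] at hd
  by_cases h : ∀ i, p i → d i = 0
  · rw [if_pos h] at hd
    exact ⟨h, Finsupp.mem_support_iff.mpr hd⟩
  · rw [if_neg h] at hd
    exact absurd rfl hd

lemma killF_isHomogeneous (p : Fin n → Prop) [DecidablePred p]
    {f : MvPolynomial (Fin n) K} {r : ℕ} (hf : f.IsHomogeneous r) :
    (killF p f).IsHomogeneous r := by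
  intro d hd
  rw [killF_coeff] at hd
  by_cases h : ∀ i, p i → d i = 0
  · rw [if_pos h] at hd; exact hf hd
  · rw [if_neg h] at hd; exact absurd rfl hd

end KillF

section HomogBridge

lemma degE_eq_degree (e : Fin n →₀ ℕ) : degE e = Finsupp.degree e := by
  rw [Finsupp.degree]
  exact (Finset.sum_subset (Finset.subset_univ _)
    (fun x _ hx => Finsupp.notMem_support_iff.mp hx)).symm

lemma degE_of_homog {f : MvPolynomial (Fin n) K} {r : ℕ} (hf : f.IsHomogeneous r)
    {e : Fin n →₀ ℕ} (he : coeff e f ≠ 0) : degE e = r := by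
  have h1 := hf he
  rw [degE_eq_degree, Finsupp.degree_eq_weight_one]
  exact h1

end HomogBridge

section DistrMonLemmas

lemma distrMon_zero (M : Fin n → ℕ → MvPolynomial (Fin n) K) :
    distrMon n K M 0 = 1 := by
  simp [distrMon]

lemma distrMon_add_single (M : Fin n → ℕ → MvPolynomial (Fin n) K) (e : Fin n →₀ ℕ)
    (κ : Fin n) :
    distrMon n K M (e + Finsupp.single κ 1) = M κ (e κ + 1) * distrMon n K M e := by
  classical
  rw [distrMon, distrMon]
  rw [← Finset.mul_prod_erase Finset.univ _ (Finset.mem_univ κ),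
      ← Finset.mul_prod_erase Finset.univ
        (fun i => ∏ j ∈ Finset.range (e i), M i (j + 1)) (Finset.mem_univ κ)]
  have h1 : (e + Finsupp.single κ 1 : Fin n →₀ ℕ) κ = e κ + 1 := by simp
  have h2 : (∏ i ∈ Finset.univ.erase κ,
        ∏ j ∈ Finset.range (((e + Finsupp.single κ 1 : Fin n →₀ ℕ)) i), M i (j + 1))
      = ∏ i ∈ Finset.univ.erase κ, ∏ j ∈ Finset.range (e i), M i (j + 1) := by
    apply Finset.prod_congr rfl
    intro i hi
    have hne : i ≠ κ := (Finset.mem_erase.mp hi).1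
    have : (e + Finsupp.single κ 1 : Fin n →₀ ℕ) i = e i := by
      simp [Finsupp.single_apply, (Ne.symm hne)]
    rw [this]
  rw [h2, h1, Finset.prod_range_succ]
  ring

lemma distrMon_isHomogeneous (M : Fin n → ℕ → MvPolynomial (Fin n) K) (e : Fin n →₀ ℕ)
    (h : ∀ i : Fin n, e i ≠ 0 → ∀ j, (M i j).IsHomogeneous 1) :
    (distrMon n K M e).IsHomogeneous (degE e) := by
  rw [distrMon]
  have hmain := MvPolynomial.IsHomogeneous.prod Finset.univ
    (fun i => ∏ j ∈ Finset.range (e i), M i (j + 1)) (fun i => e i) ?_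
  · exact hmain
  · intro i _
    show (∏ j ∈ Finset.range (e i), M i (j + 1)).IsHomogeneous (e i)
    by_cases he : e i = 0
    · rw [he]
      simp only [Finset.range_zero, Finset.prod_empty]
      exact isHomogeneous_one _ _
    · have hinner := MvPolynomial.IsHomogeneous.prod (Finset.range (e i))
        (fun j => M i (j + 1)) (fun _ => 1) (fun j _ => h i he (j + 1))
      simpa using hinner

lemma killF_distrMon (p : Fin n → Prop) [DecidablePred p]
    (M : Fin n → ℕ → MvPolynomial (Fin n) K) (e : Fin n →₀ ℕ) :
    killF p (distrMon n K M e) = distrMon n K (fun i j => killF p (M i j)) e := by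
  rw [distrMon, distrMon, map_prod]
  exact Finset.prod_congr rfl fun i _ => by rw [map_prod]

end DistrMonLemmas


variable {n : ℕ} {K : Type*} [Field K]

lemma le_ext {a b : Fin n →₀ ℕ} (h : ∀ v, a v ≤ b v) : a ≤ b := Finsupp.le_def.mpr h

lemma le_apply {a b : Fin n →₀ ℕ} (h : a ≤ b) (v : Fin n) : a v ≤ b v :=
  Finsupp.le_def.mp h v

lemma sub_add_cancel_single {e : Fin n →₀ ℕ} {κ : Fin n} (h : e κ ≠ 0) :
    (e - Finsupp.single κ 1) + Finsupp.single κ 1 = e :=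
  tsub_add_cancel_of_le (Finsupp.single_le_iff.mpr (Nat.one_le_iff_ne_zero.mpr h))

lemma move_add_single {t : Fin n →₀ ℕ} {i j κ : Fin n} (ht : t j ≠ 0) :
    (t + Finsupp.single κ 1) - Finsupp.single j 1 + Finsupp.single i 1
      = (t - Finsupp.single j 1 + Finsupp.single i 1) + Finsupp.single κ 1 := by
  have htj : 1 ≤ t j := Nat.one_le_iff_ne_zero.mpr ht
  ext v
  by_cases hjv : j = v
  · subst hjv
    simp only [Finsupp.add_apply, Finsupp.tsub_apply, Finsupp.single_apply]
    split_ifs <;> omega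
  · simp only [Finsupp.add_apply, Finsupp.tsub_apply, Finsupp.single_apply,
      if_neg hjv]
    split_ifs <;> omega

lemma constr :
    ∀ (k : ℕ), k ≤ n → ∀ (d : ℕ) (M : Fin n → ℕ → MvPolynomial (Fin n) K)
      (S : Set (Fin n →₀ ℕ)) (m : Fin n →₀ ℕ),
      (∀ s ∈ S, ∀ v : Fin n, k ≤ ↑v → s v = 0) →
      (∀ (i : Fin n) (j : ℕ), ↑i < k → (M i j).IsHomogeneous 1) →
      (∀ (i : Fin n) (j : ℕ), ↑i < k → ∀ d0 ∈ (M i j).support, ∀ v : Fin n, k ≤ ↑v → d0 v = 0) →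
      (∀ k', k' ≤ k → ∀ js : Fin n → ℕ, ∀ v : Fin n, ↑v < k →
        X v ∈ Submodule.span K ({p | ∃ i : Fin n, ↑i < k' ∧ p = M i (js i)} ∪
          {p : MvPolynomial (Fin n) K | ∃ i : Fin n, k' ≤ ↑i ∧ p = X i})) →
      (∀ e : Fin n →₀ ℕ, (∃ s ∈ S, s ≤ e) → ∀ i j : Fin n, i ≤ j → ↑j < k → e j ≠ 0 →
        (∃ s ∈ S, s ≤ e - Finsupp.single j 1 + Finsupp.single i 1)) →
      (∃ s ∈ S, s ≤ m) →
      (∀ v : Fin n, k ≤ ↑v → m v = 0) →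
      degE m = d →
      ∃ f ∈ Submodule.span K {p | ∃ e : Fin n →₀ ℕ, (∃ s ∈ S, s ≤ e) ∧
          (∀ v : Fin n, k ≤ ↑v → e v = 0) ∧ degE e = d ∧ p = distrMon n K M e},
        IsLM f m := by
  intro k
  induction k with
  | zero =>
    intro _ d M S m hS hhom hsupp hgen hss hm hmsupp hd
    have hm0 : m = 0 := Finsupp.ext fun v => hmsupp v (Nat.zero_le _)
    subst hm0
    refine ⟨distrMon n K M 0,
      Submodule.subset_span ⟨0, hm, fun v _ => by simp, hd, rfl⟩, ?_, ?_⟩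
    · rw [distrMon_zero, coeff_one]
      simp
    · intro e he
      left
      rw [distrMon_zero, coeff_one] at he
      by_cases h : (0 : Fin n →₀ ℕ) = e
      · exact h.symm
      · rw [if_neg h] at he; exact absurd rfl he
  | succ N ih =>
    intro hk d
    induction d using Nat.strong_induction_on with
    | _ d ihd =>
    intro M S m hS hhom hsupp hgen hss hm hmsupp hd
    classical
    have hKn : N < n := lt_of_lt_of_le (Nat.lt_succ_self N) hk
    set κ : Fin n := ⟨N, hKn⟩ with hκdef
    have hκval : (κ : ℕ) = N := rfl
    by_cases hmκ : m κ = 0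
    · -- FREE CASE
      set q : Fin n → Prop := fun i => i = κ with hq
      set M' : Fin n → ℕ → MvPolynomial (Fin n) K := fun i j => killF q (M i j) with hM'
      set S' : Set (Fin n →₀ ℕ) := {s | s ∈ S ∧ s κ = 0} with hS'def
      have hvK : ∀ v : Fin n, N ≤ ↑v → v ≠ κ → (N+1 : ℕ) ≤ ↑v := by
        intro v hv hne
        rcases Nat.lt_or_ge (v : ℕ) (N+1) with h | h
        · exact absurd (Fin.ext (by omega : (v:ℕ) = (κ:ℕ))) hne
        · exact h
      have hS1 : ∀ s ∈ S', ∀ v : Fin n, N ≤ ↑v → s v = 0 := by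
        rintro s ⟨hsS, hsκ⟩ v hv
        by_cases hvκ : v = κ
        · rw [hvκ]; exact hsκ
        · exact hS s hsS v (hvK v hv hvκ)
      have hhom1 : ∀ (i : Fin n) (j : ℕ), ↑i < N → (M' i j).IsHomogeneous 1 :=
        fun i j hi => killF_isHomogeneous q (hhom i j (by omega))
      have hsupp1 : ∀ (i : Fin n) (j : ℕ), ↑i < N → ∀ d0 ∈ (M' i j).support,
          ∀ v : Fin n, N ≤ ↑v → d0 v = 0 := by
        intro i j hi d0 hd0 v hv
        obtain ⟨hcond, hd0'⟩ := mem_support_killF q hd0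
        by_cases hvκ : v = κ
        · rw [hvκ]; exact hcond κ rfl
        · exact hsupp i j (by omega) d0 hd0' v (hvK v hv hvκ)
      have hgen1 : ∀ k', k' ≤ N → ∀ js : Fin n → ℕ, ∀ v : Fin n, ↑v < N →
          X v ∈ Submodule.span K ({p | ∃ i : Fin n, ↑i < k' ∧ p = M' i (js i)} ∪
            {p : MvPolynomial (Fin n) K | ∃ i : Fin n, k' ≤ ↑i ∧ p = X i}) := by
        intro k' hk' js v hv
        have h0 := hgen k' (by omega) js v (by omega)
        have hvκ : v ≠ κ := fun h => by rw [h, hκval] at hv; omega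
        have hXv : (X v : MvPolynomial (Fin n) K) = killF q (X v) :=
          (killF_X q (by simp [hq, hvκ])).symm
        rw [hXv]
        have h1 := Submodule.mem_map_of_mem (f := (killF (n := n) (K := K) q).toLinearMap) h0
        rw [Submodule.map_span] at h1
        refine Submodule.span_le.mpr ?_ h1
        rintro x ⟨y, hy, rfl⟩
        rcases hy with ⟨i, hik, rfl⟩ | ⟨i, hik, rfl⟩
        · exact Submodule.subset_span (Or.inl ⟨i, hik, rfl⟩)
        · by_cases hiκ : i = κ
          · show killF q (X i) ∈ _
            rw [killF_X0 q (by simp [hq, hiκ])]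
            exact Submodule.zero_mem _
          · show killF q (X i) ∈ _
            rw [killF_X q (by simp [hq, hiκ])]
            exact Submodule.subset_span (Or.inr ⟨i, hik, rfl⟩)
      have hss1 : ∀ e : Fin n →₀ ℕ, (∃ s ∈ S', s ≤ e) → ∀ i j : Fin n, i ≤ j → ↑j < N →
          e j ≠ 0 → (∃ s ∈ S', s ≤ e - Finsupp.single j 1 + Finsupp.single i 1) := by
        rintro e ⟨s, ⟨hsS, hsκ⟩, hse⟩ i j hij hjK hej
        have hij' : (i:ℕ) ≤ (j:ℕ) := Fin.le_def.mp hij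
        have hjκ : j ≠ κ := fun h => by rw [h, hκval] at hjK; omega
        have hiκ : i ≠ κ := fun h => by rw [h, hκval] at hij'; omega
        by_cases hsj : s j = e j
        · have hsj0 : s j ≠ 0 := by rw [hsj]; exact hej
          obtain ⟨s₂, hs₂S, hs₂⟩ := hss s ⟨s, hsS, le_rfl⟩ i j hij (by omega) hsj0
          have hs₂κ : s₂ κ = 0 := by
            have h1 := le_apply hs₂ κ
            simp only [Finsupp.add_apply, Finsupp.tsub_apply, Finsupp.single_apply,
              if_neg hjκ, if_neg hiκ] at h1
            omega
          refine ⟨s₂, ⟨hs₂S, hs₂κ⟩, le_trans hs₂ (le_ext fun v => ?_)⟩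
          have h2 := le_apply hse v
          simp only [Finsupp.add_apply, Finsupp.tsub_apply, Finsupp.single_apply]
          by_cases h3 : j = v
          · subst h3; split_ifs <;> omega
          · split_ifs <;> omega
        · have hsj' : s j < e j := lt_of_le_of_ne (le_apply hse j) hsj
          refine ⟨s, ⟨hsS, hsκ⟩, le_ext fun v => ?_⟩
          have h2 := le_apply hse v
          simp only [Finsupp.add_apply, Finsupp.tsub_apply, Finsupp.single_apply]
          by_cases h3 : j = v
          · subst h3; split_ifs <;> omega
          · split_ifs <;> omega
      have hm1 : ∃ s ∈ S', s ≤ m := by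
        obtain ⟨s, hsS, hsm⟩ := hm
        have hs0 : s κ = 0 := by
          have := le_apply hsm κ; rw [hmκ] at this; omega
        exact ⟨s, ⟨hsS, hs0⟩, hsm⟩
      have hmsupp1 : ∀ v : Fin n, N ≤ ↑v → m v = 0 := by
        intro v hv
        by_cases hvκ : v = κ
        · rw [hvκ]; exact hmκ
        · exact hmsupp v (hvK v hv hvκ)
      obtain ⟨f', hf'mem, hf'lm⟩ :=
        ih (le_of_lt hKn) d M' S' m hS1 hhom1 hsupp1 hgen1 hss1 hm1 hmsupp1 hd
      set A₂ : Set (MvPolynomial (Fin n) K) := {p | ∃ e : Fin n →₀ ℕ, (∃ s ∈ S', s ≤ e) ∧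
          (∀ v : Fin n, N ≤ ↑v → e v = 0) ∧ degE e = d ∧ p = distrMon n K M e} with hA₂
      have himg : {p : MvPolynomial (Fin n) K | ∃ e : Fin n →₀ ℕ, (∃ s ∈ S', s ≤ e) ∧
          (∀ v : Fin n, N ≤ ↑v → e v = 0) ∧ degE e = d ∧ p = distrMon n K M' e}
          = (killF (n := n) (K := K) q) '' A₂ := by
        ext p0
        constructor
        · rintro ⟨e, he1, he2, he3, rfl⟩
          refine ⟨distrMon n K M e, ⟨e, he1, he2, he3, rfl⟩, ?_⟩
          rw [hM']; exact killF_distrMon q M e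
        · rintro ⟨p1, ⟨e, he1, he2, he3, rfl⟩, rfl⟩
          refine ⟨e, he1, he2, he3, ?_⟩
          rw [hM']; exact killF_distrMon q M e
      rw [himg, ← AlgHom.coe_toLinearMap, ← Submodule.map_span] at hf'mem
      obtain ⟨f, hfmem, hff'⟩ := Submodule.mem_map.mp hf'mem
      rw [AlgHom.toLinearMap_apply] at hff'
      have hfbig : f ∈ Submodule.span K {p | ∃ e : Fin n →₀ ℕ, (∃ s ∈ S, s ≤ e) ∧
          (∀ v : Fin n, (N+1:ℕ) ≤ ↑v → e v = 0) ∧ degE e = d ∧ p = distrMon n K M e} := by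
        refine Submodule.span_mono ?_ hfmem
        rintro p0 ⟨e, ⟨s, ⟨hsS, _⟩, hse⟩, he2, he3, rfl⟩
        exact ⟨e, ⟨s, hsS, hse⟩, fun v hv => he2 v (by omega), he3, rfl⟩
      have hfhom : f.IsHomogeneous d := by
        have hsub : A₂ ⊆ ↑(homogeneousSubmodule (Fin n) K d) := by
          rintro p0 ⟨e, he1, he2, he3, rfl⟩
          rw [SetLike.mem_coe, mem_homogeneousSubmodule, ← he3]
          apply distrMon_isHomogeneous
          intro i hi j
          have hiK : (i : ℕ) < N := by
            by_contra hc
            exact hi (he2 i (by omega))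
          exact hhom i j (by omega)
        rw [← mem_homogeneousSubmodule]
        exact Submodule.span_le.mpr hsub hfmem
      refine ⟨f, hfbig, ?_, ?_⟩
      · have h1 : coeff m (killF q f) = coeff m f := by
          rw [killF_coeff, if_pos]
          intro i hi
          have hiκ : i = κ := by rw [hq] at hi; exact hi
          rw [hiκ]; exact hmκ
        have h2 := hf'lm.1
        rw [← hff', h1] at h2
        exact h2
      · intro e he
        by_cases hcase : ∀ v : Fin n, N ≤ ↑v → e v = 0
        · have h1 : coeff e (killF q f) = coeff e f := by
            rw [killF_coeff, if_pos]
            intro i hi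
            have hiκ : i = κ := by rw [hq] at hi; exact hi
            rw [hiκ]; exact hcase κ (le_of_eq hκval.symm)
          have he' : coeff e f' ≠ 0 := by rw [← hff', h1]; exact he
          exact hf'lm.2 e he'
        · push_neg at hcase
          obtain ⟨v, hv, hev⟩ := hcase
          right
          refine drlLT_of_tail N ?_ hmsupp1 hv hev
          rw [degE_of_homog hfhom he, hd]
    · -- COLON CASE
      set m' := m - Finsupp.single κ 1 with hm'def
      have hmm' : m' + Finsupp.single κ 1 = m := sub_add_cancel_single hmκ
      have hdm' : degE m' + 1 = d := by
        rw [← hd, ← hmm', degE_add, degE_single]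
      set S' : Set (Fin n →₀ ℕ) := {e | (∃ s ∈ S, s ≤ e + Finsupp.single κ 1) ∧
        ∀ v : Fin n, (N+1 : ℕ) ≤ ↑v → e v = 0} with hS'def
      have hchar : ∀ t : Fin n →₀ ℕ, (∃ s ∈ S', s ≤ t) ↔
          (∃ s ∈ S, s ≤ t + Finsupp.single κ 1) := by
        intro t
        constructor
        · rintro ⟨e, ⟨⟨s, hsS, hse⟩, -⟩, het⟩
          refine ⟨s, hsS, le_trans hse (le_ext fun v => ?_)⟩
          have := le_apply het v
          simp only [Finsupp.add_apply]
          omega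
        · rintro ⟨s, hsS, hst⟩
          by_cases hsκ : s κ ≤ t κ
          · refine ⟨s, ⟨⟨s, hsS, le_ext fun v => by simp only [Finsupp.add_apply]; omega⟩,
              fun v hv => hS s hsS v (by omega)⟩, le_ext fun v => ?_⟩
            have h2 := le_apply hst v
            simp only [Finsupp.add_apply, Finsupp.single_apply] at h2
            by_cases hvκ : κ = v
            · rw [← hvκ]; exact hsκ
            · rw [if_neg hvκ] at h2; omega
          · have hsκ' : 1 ≤ s κ := by
              have h2 := le_apply hst κ
              simp only [Finsupp.add_apply, Finsupp.single_apply, if_pos rfl] at h2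
              omega
            refine ⟨s - Finsupp.single κ 1, ⟨⟨s, hsS, le_ext fun v => ?_⟩, fun v hv => ?_⟩,
              le_ext fun v => ?_⟩
            · by_cases hvκ : κ = v
              · subst hvκ
                simp only [Finsupp.add_apply, Finsupp.tsub_apply, Finsupp.single_apply,
                  if_pos rfl]
                omega
              · simp only [Finsupp.add_apply, Finsupp.tsub_apply, Finsupp.single_apply,
                  if_neg hvκ]
                omega
            · simp only [Finsupp.tsub_apply]
              rw [hS s hsS v (by omega)]
              omega
            · have h2 := le_apply hst v
              simp only [Finsupp.add_apply, Finsupp.single_apply] at h2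
              simp only [Finsupp.tsub_apply, Finsupp.single_apply]
              by_cases hvκ : κ = v
              · rw [← hvκ] at h2 ⊢; rw [if_pos rfl] at h2 ⊢; omega
              · rw [if_neg hvκ] at h2 ⊢; omega
      have hss2 : ∀ e : Fin n →₀ ℕ, (∃ s ∈ S', s ≤ e) → ∀ i j : Fin n, i ≤ j → ↑j < N+1 →
          e j ≠ 0 → (∃ s ∈ S', s ≤ e - Finsupp.single j 1 + Finsupp.single i 1) := by
        intro e he i j hij hjk hej
        rw [hchar] at he ⊢
        have h1 : (e + Finsupp.single κ 1 : Fin n →₀ ℕ) j ≠ 0 := by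
          have h0 : e j ≤ (e + Finsupp.single κ 1 : Fin n →₀ ℕ) j := by
            simp only [Finsupp.add_apply]; omega
          omega
        obtain ⟨s, hsS, hs⟩ := hss (e + Finsupp.single κ 1) he i j hij hjk h1
        rw [move_add_single hej] at hs
        exact ⟨s, hsS, hs⟩
      have hm2 : ∃ s ∈ S', s ≤ m' := by rw [hchar, hmm']; exact hm
      have hm'supp : ∀ v : Fin n, (N+1:ℕ) ≤ ↑v → m' v = 0 := by
        intro v hv
        rw [hm'def]
        simp only [Finsupp.tsub_apply]
        rw [hmsupp v hv]
        omega
      obtain ⟨f', hf'mem, hf'lm⟩ := ihd (degE m') (by omega) M S' m'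
        (fun s hs => hs.2) hhom hsupp hgen hss2 hm2 hm'supp rfl
      have hkey : ∀ e' : Fin n →₀ ℕ, (∃ s ∈ S', s ≤ e') →
          (∀ v : Fin n, (N+1:ℕ) ≤ ↑v → e' v = 0) → degE e' = degE m' →
          X κ * distrMon n K M e' ∈ Submodule.span K
            {p | ∃ e : Fin n →₀ ℕ, (∃ s ∈ S, s ≤ e) ∧
              (∀ v : Fin n, (N+1:ℕ) ≤ ↑v → e v = 0) ∧ degE e = d ∧ p = distrMon n K M e} := by
        intro e' he' he'supp he'deg
        have hXκ : X κ ∈ Submodule.span K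
            {p : MvPolynomial (Fin n) K | ∃ i : Fin n, ↑i < N+1 ∧ p = M i (e' i + 1)} := by
          have h0 := hgen (N+1) le_rfl (fun i => e' i + 1) κ (by omega)
          set q2 : Fin n → Prop := fun i => (N+1:ℕ) ≤ ↑i with hq2
          have hXfix : killF (n := n) (K := K) q2 (X κ) = X κ :=
            killF_X q2 (by simp only [hq2]; omega)
          have h1 := Submodule.mem_map_of_mem (f := (killF (n := n) (K := K) q2).toLinearMap) h0
          rw [Submodule.map_span] at h1
          rw [← hXfix]
          refine Submodule.span_le.mpr ?_ h1
          rintro x ⟨y, hy, rfl⟩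
          rcases hy with ⟨i, hik, rfl⟩ | ⟨i, hik, rfl⟩
          · have hfix : killF q2 (M i (e' i + 1)) = M i (e' i + 1) :=
              killF_fix q2 _ (fun d0 hd0 v hv =>
                hsupp i (e' i + 1) hik d0 hd0 v (by simpa [hq2] using hv))
            show killF q2 (M i (e' i + 1)) ∈ _
            rw [hfix]
            exact Submodule.subset_span ⟨i, hik, rfl⟩
          · show killF q2 (X i) ∈ _
            rw [killF_X0 q2 (by simpa [hq2] using hik)]
            exact Submodule.zero_mem _
        have h2 := Submodule.mem_map_of_mem
          (f := LinearMap.mulRight K (distrMon n K M e')) hXκ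
        rw [Submodule.map_span] at h2
        have h3 : X κ * distrMon n K M e' =
            LinearMap.mulRight K (distrMon n K M e') (X κ) := by
          rw [LinearMap.mulRight_apply]
        rw [h3]
        refine Submodule.span_le.mpr ?_ h2
        rintro x ⟨y, ⟨i, hik, rfl⟩, rfl⟩
        show LinearMap.mulRight K (distrMon n K M e') (M i (e' i + 1)) ∈ _
        rw [LinearMap.mulRight_apply, ← distrMon_add_single]
        apply Submodule.subset_span
        refine ⟨e' + Finsupp.single i 1, ?_, ?_, ?_, rfl⟩
        · have hiκ : i ≤ κ := Fin.le_def.mpr (by rw [hκval]; omega)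
          have heκ : (e' + Finsupp.single κ 1 : Fin n →₀ ℕ) κ ≠ 0 := by
            simp only [Finsupp.add_apply, Finsupp.single_eq_same]
            omega
          obtain ⟨s, hsS, hs⟩ := hss (e' + Finsupp.single κ 1) ((hchar e').mp he')
            i κ hiκ (by rw [hκval]; omega) heκ
          rw [add_tsub_cancel_right] at hs
          exact ⟨s, hsS, hs⟩
        · intro v hv
          have h5 : i ≠ v := fun h => by rw [← h] at hv; omega
          simp only [Finsupp.add_apply, Finsupp.single_apply, if_neg h5,
            he'supp v hv, add_zero]
        · rw [degE_add, degE_single, he'deg]; omega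
      have hfmem : f' * X κ ∈ Submodule.span K
          {p | ∃ e : Fin n →₀ ℕ, (∃ s ∈ S, s ≤ e) ∧
            (∀ v : Fin n, (N+1:ℕ) ≤ ↑v → e v = 0) ∧ degE e = d ∧ p = distrMon n K M e} := by
        have h3 := Submodule.mem_map_of_mem (f := LinearMap.mulRight K (X κ)) hf'mem
        rw [Submodule.map_span] at h3
        have h4 : f' * X κ = LinearMap.mulRight K (X κ) f' := by
          rw [LinearMap.mulRight_apply]
        rw [h4]
        refine Submodule.span_le.mpr ?_ h3
        rintro x ⟨y, ⟨e', he'1, he'2, he'3, rfl⟩, rfl⟩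
        show LinearMap.mulRight K (X κ) (distrMon n K M e') ∈ _
        rw [LinearMap.mulRight_apply, mul_comm]
        exact hkey e' he'1 he'2 he'3
      refine ⟨f' * X κ, hfmem, ?_, ?_⟩
      · rw [coeff_mul_X']
        rw [if_pos (Finsupp.mem_support_iff.mpr hmκ)]
        exact hm'def ▸ hf'lm.1
      · intro e he
        rw [coeff_mul_X'] at he
        by_cases hmem : κ ∈ e.support
        · rw [if_pos hmem] at he
          have heκ : e κ ≠ 0 := Finsupp.mem_support_iff.mp hmem
          rcases hf'lm.2 _ he with h1 | h1
          · left
            rw [← sub_add_cancel_single heκ, h1, hmm']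
          · right
            have h2 := drlLT_add_right (Finsupp.single κ 1) h1
            rw [sub_add_cancel_single heκ, hmm'] at h2
            exact h2
        · rw [if_neg hmem] at he; exact absurd rfl he

end DistrAux
namespace DistrAux

variable {n : ℕ} {K : Type*} [Field K]

lemma finite_degE (d : ℕ) : {e : Fin n →₀ ℕ | degE e = d}.Finite := by
  classical
  have h : {e : Fin n →₀ ℕ | degE e = d} ⊆
      (fun e : Fin n →₀ ℕ => (e : Fin n → ℕ)) ⁻¹'
        (Set.univ.pi fun _ : Fin n => Set.Iic d) := by
    intro e he v _
    have h1 : e v ≤ degE e :=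
      Finset.single_le_sum (f := fun v => e v) (fun _ _ => Nat.zero_le _)
        (Finset.mem_univ v)
    rw [he] at h1
    exact h1
  have hfin : (Set.univ.pi fun _ : Fin n => Set.Iic d).Finite :=
    Set.Finite.pi (fun _ => Set.finite_Iic d)
  exact (hfin.preimage (Function.Injective.injOn DFunLike.coe_injective)).subset h

lemma gauss (d : ℕ) (g : (Fin n →₀ ℕ) → MvPolynomial (Fin n) K)
    (B : Set (Fin n →₀ ℕ)) (hBfin : B.Finite) (hBdeg : ∀ m ∈ B, degE m = d)
    (hwit : ∀ m ∈ B, ∃ f ∈ Submodule.span K (g '' B), IsLM f m) :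
    ∀ h ∈ Submodule.span K (g '' B), h ≠ 0 → ∃ m ∈ B, IsLM h m := by
  classical
  intro h hh hh0
  haveI := hBfin.fintype
  have hwit' : ∀ b : ↥B, ∃ f, f ∈ Submodule.span K (g '' B) ∧ IsLM f ↑b := by
    intro b
    obtain ⟨f, h1, h2⟩ := hwit ↑b b.2
    exact ⟨f, h1, h2⟩
  choose F hFmem hFlm using hwit'
  have hli : LinearIndependent K F := by
    rw [Fintype.linearIndependent_iff]
    intro c hc
    by_contra hcon
    push_neg at hcon
    obtain ⟨b0, hb0⟩ := hcon
    have hTne : (Finset.univ.filter fun b : ↥B => c b ≠ 0).Nonempty :=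
      ⟨b0, by simp [hb0]⟩
    obtain ⟨mstar, hmT, hmax⟩ := exists_drl_max
      ((Finset.univ.filter fun b : ↥B => c b ≠ 0).image (fun b : ↥B => (b : Fin n →₀ ℕ)))
      (hTne.image _)
    obtain ⟨bstar, hbstar, hbeq⟩ := Finset.mem_image.mp hmT
    have hcoef : coeff mstar (∑ b : ↥B, c b • F b) = c bstar * coeff mstar (F bstar) := by
      rw [MvPolynomial.coeff_sum]
      rw [Finset.sum_eq_single bstar]
      · rw [coeff_smul, smul_eq_mul]
      · intro b _ hbne
        rw [coeff_smul, smul_eq_mul]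
        by_cases hcb : c b = 0
        · rw [hcb, zero_mul]
        · have hbT : (b : Fin n →₀ ℕ) ∈
              (Finset.univ.filter fun b : ↥B => c b ≠ 0).image
                (fun b : ↥B => (b : Fin n →₀ ℕ)) :=
            Finset.mem_image.mpr ⟨b, by simp [hcb], rfl⟩
          have hz : coeff mstar (F b) = 0 := by
            by_contra hne
            rcases (hFlm b).2 mstar hne with h1 | h1
            · exact hbne (Subtype.ext (h1.symm.trans hbeq.symm))
            · exact hmax _ hbT h1
          rw [hz, mul_zero]
      · intro hnb; exact absurd (Finset.mem_univ bstar) hnb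
    rw [hc, coeff_zero] at hcoef
    have h1 : coeff mstar (F bstar) ≠ 0 := hbeq ▸ (hFlm bstar).1
    have h2 : c bstar ≠ 0 := (Finset.mem_filter.mp hbstar).2
    rcases mul_eq_zero.mp hcoef.symm with h3 | h3
    · exact h2 h3
    · exact h1 h3
  rcases Set.eq_empty_or_nonempty B with hB | hB
  · exfalso
    apply hh0
    rw [hB] at hh
    simp only [Set.image_empty, Submodule.span_empty, Submodule.mem_bot] at hh
    exact hh
  haveI : Nonempty ↥B := hB.to_subtype
  haveI hfd : FiniteDimensional K ↥(Submodule.span K (g '' B)) :=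
    FiniteDimensional.span_of_finite K (hBfin.image g)
  have hcard : Module.finrank K ↥(Submodule.span K (g '' B)) ≤ Fintype.card ↥B := by
    have h1 : g '' B = Set.range (fun b : ↥B => g ↑b) := by
      rw [Set.image_eq_range]
    rw [h1]
    haveI : Fintype ↑(Set.range fun b : ↥B => g ↑b) := Set.fintypeRange _
    refine le_trans (finrank_span_le_card _) ?_
    rw [Set.toFinset_range]
    exact le_trans (Finset.card_image_le) (le_of_eq (Finset.card_univ))
  set F' : ↥B → ↥(Submodule.span K (g '' B)) := fun b => ⟨F b, hFmem b⟩ with hF'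
  have hliW : LinearIndependent K F' := by
    apply LinearIndependent.of_comp (Submodule.span K (g '' B)).subtype
    exact hli
  have hge := hliW.fintype_card_le_finrank
  have heq : Fintype.card ↥B = Module.finrank K ↥(Submodule.span K (g '' B)) :=
    le_antisymm hge hcard
  have hspan := hliW.span_eq_top_of_card_eq_finrank heq
  have hmem : (⟨h, hh⟩ : ↥(Submodule.span K (g '' B))) ∈
      Submodule.span K (Set.range F') := by rw [hspan]; trivial
  obtain ⟨c, hc⟩ := (Submodule.mem_span_range_iff_exists_fun K).mp hmem
  have hrep : ∑ b : ↥B, c b • F b = h := by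
    have h2 := congrArg ((Submodule.span K (g '' B)).subtype) hc
    rw [map_sum] at h2
    simpa using h2
  have hTne : (Finset.univ.filter fun b : ↥B => c b ≠ 0).Nonempty := by
    by_contra hcon
    rw [Finset.not_nonempty_iff_eq_empty, Finset.filter_eq_empty_iff] at hcon
    apply hh0
    rw [← hrep]
    apply Finset.sum_eq_zero
    intro b hb
    rw [not_not.mp (hcon (Finset.mem_univ b)), zero_smul]
  obtain ⟨mstar, hmT, hmax⟩ := exists_drl_max
    ((Finset.univ.filter fun b : ↥B => c b ≠ 0).image (fun b : ↥B => (b : Fin n →₀ ℕ)))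
    (hTne.image _)
  obtain ⟨bstar, hbstar, hbeq⟩ := Finset.mem_image.mp hmT
  have hbstar' : c bstar ≠ 0 := (Finset.mem_filter.mp hbstar).2
  have hcoefh : coeff mstar h = c bstar * coeff mstar (F bstar) := by
    rw [← hrep, MvPolynomial.coeff_sum, Finset.sum_eq_single bstar]
    · rw [coeff_smul, smul_eq_mul]
    · intro b _ hbne
      rw [coeff_smul, smul_eq_mul]
      by_cases hcb : c b = 0
      · rw [hcb, zero_mul]
      · have hbT : (b : Fin n →₀ ℕ) ∈
            (Finset.univ.filter fun b : ↥B => c b ≠ 0).image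
              (fun b : ↥B => (b : Fin n →₀ ℕ)) :=
          Finset.mem_image.mpr ⟨b, by simp [hcb], rfl⟩
        have hz : coeff mstar (F b) = 0 := by
          by_contra hne
          rcases (hFlm b).2 mstar hne with h1 | h1
          · exact hbne (Subtype.ext (h1.symm.trans hbeq.symm))
          · exact hmax _ hbT h1
        rw [hz, mul_zero]
    · intro hnb; exact absurd (Finset.mem_univ bstar) hnb
  refine ⟨mstar, hbeq ▸ bstar.2, ?_, ?_⟩
  · rw [hcoefh]
    exact mul_ne_zero hbstar' (hbeq ▸ (hFlm bstar).1)
  · intro e he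
    have hex : ∃ b : ↥B, c b ≠ 0 ∧ coeff e (F b) ≠ 0 := by
      by_contra hcon
      push_neg at hcon
      apply he
      rw [← hrep, MvPolynomial.coeff_sum]
      apply Finset.sum_eq_zero
      intro b _
      rw [coeff_smul, smul_eq_mul]
      by_cases hcb : c b = 0
      · rw [hcb, zero_mul]
      · rw [hcon b hcb, mul_zero]
    obtain ⟨b, hcb, hfb⟩ := hex
    have hbT : (b : Fin n →₀ ℕ) ∈
        (Finset.univ.filter fun b : ↥B => c b ≠ 0).image
          (fun b : ↥B => (b : Fin n →₀ ℕ)) :=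
      Finset.mem_image.mpr ⟨b, by simp [hcb], rfl⟩
    have h1 := (hFlm b).2 e hfb
    have h2 : (b : Fin n →₀ ℕ) = mstar ∨ drlLT n (↑b) mstar := by
      by_cases hbm : (b : Fin n →₀ ℕ) = mstar
      · exact Or.inl hbm
      · rcases drlLT_total (by rw [hBdeg _ b.2, hBdeg _ (hbeq ▸ bstar.2)]) hbm with hlt | hlt
        · exact Or.inr hlt
        · exact absurd hlt (hmax _ hbT)
    rcases h1 with h1 | h1
    · rcases h2 with h2 | h2
      · exact Or.inl (h1.trans h2)
      · exact Or.inr (by rw [h1]; exact h2)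
    · rcases h2 with h2 | h2
      · exact Or.inr (by rw [← h2]; exact h1)
      · exact Or.inr (drlLT_trans h1 h2)

lemma mem_monomialIdeal_iff (S : Set (Fin n →₀ ℕ)) (f : MvPolynomial (Fin n) K) :
    f ∈ Ideal.span ((fun e => monomial e (1:K)) '' S) ↔
      ∀ e ∈ f.support, ∃ s ∈ S, s ≤ e := by
  classical
  constructor
  · intro hf
    let T : Ideal (MvPolynomial (Fin n) K) :=
      { carrier := {f | ∀ e ∈ f.support, ∃ s ∈ S, s ≤ e}
        add_mem' := by
          intro a b ha hb e he
          rcases Finset.mem_union.mp (MvPolynomial.support_add he) with h | h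
          · exact ha e h
          · exact hb e h
        zero_mem' := by intro e he; simp at he
        smul_mem' := by
          intro c x hx e he
          have he' : e ∈ (c * x).support := by simpa using he
          have h2 := MvPolynomial.support_mul c x he'
          rw [Finset.mem_add] at h2
          obtain ⟨a', ha', b', hb', rfl⟩ := h2
          obtain ⟨s, hsS, hsb⟩ := hx b' hb'
          refine ⟨s, hsS, le_trans hsb (le_ext fun v => ?_)⟩
          simp only [Finsupp.add_apply]
          omega }
    have hTge : Ideal.span ((fun e => monomial e (1:K)) '' S) ≤ T := by
      rw [Ideal.span_le]
      rintro p ⟨s, hs, rfl⟩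
      intro e he
      rw [MvPolynomial.support_monomial, if_neg (one_ne_zero (α := K))] at he
      rw [Finset.mem_singleton] at he
      subst he
      exact ⟨e, hs, le_rfl⟩
    exact hTge hf
  · intro hall
    rw [f.as_sum]
    apply Ideal.sum_mem
    intro e he
    obtain ⟨s, hsS, hse⟩ := hall e he
    have heq : monomial e (coeff e f) =
        monomial (e - s) (coeff e f) * monomial s 1 := by
      rw [monomial_mul, mul_one, tsub_add_cancel_of_le hse]
    rw [heq]
    exact Ideal.mul_mem_left _ _ (Ideal.subset_span ⟨s, hsS, rfl⟩)

lemma monomial_mem_monomialIdeal_iff (S : Set (Fin n →₀ ℕ)) (m : Fin n →₀ ℕ) :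
    monomial m (1:K) ∈ Ideal.span ((fun e => monomial e (1:K)) '' S) ↔
      ∃ s ∈ S, s ≤ m := by
  classical
  rw [mem_monomialIdeal_iff]
  constructor
  · intro h
    apply h
    rw [MvPolynomial.support_monomial, if_neg (one_ne_zero (α := K))]
    exact Finset.mem_singleton_self m
  · intro h e he
    rw [MvPolynomial.support_monomial, if_neg (one_ne_zero (α := K)),
      Finset.mem_singleton] at he
    subst he
    exact h

lemma distr_monomial (L : Fin n → ℕ → MvPolynomial (Fin n) K) (e : Fin n →₀ ℕ) :
    distr n K L (monomial e (1:K)) = distrMon n K L e := by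
  classical
  rw [distr, MvPolynomial.support_monomial, if_neg (one_ne_zero (α := K)),
    Finset.sum_singleton, coeff_monomial, if_pos rfl, one_smul]

lemma hc_homog {g : MvPolynomial (Fin n) K} {r : ℕ} (hg : g.IsHomogeneous r) (d : ℕ) :
    homogeneousComponent d g = if r = d then g else 0 := by
  ext x
  rw [coeff_homogeneousComponent]
  by_cases hrd : r = d
  · subst hrd
    rw [if_pos rfl]
    by_cases hdeg : Finsupp.degree x = r
    · rw [if_pos hdeg]
    · rw [if_neg hdeg]
      by_cases hx : coeff x g = 0
      · rw [hx]
      · exact absurd ((degE_eq_degree x).symm.trans (degE_of_homog hg hx)) hdeg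
  · rw [if_neg hrd, coeff_zero]
    by_cases hdeg : Finsupp.degree x = d
    · rw [if_pos hdeg]
      by_cases hx : coeff x g = 0
      · exact hx
      · exact absurd (((degE_eq_degree x).symm.trans (degE_of_homog hg hx)).symm.trans hdeg) hrd
    · rw [if_neg hdeg]
end DistrAux

section Assembly

open DistrAux

variable {n : ℕ} {K : Type*} [Field K]

theorem main_thm (L : Fin n → ℕ → MvPolynomial (Fin n) K)
    (hLhom : ∀ i j, (L i j).IsHomogeneous 1)
    (hLspan : ∀ js : Fin n → ℕ, ∀ k : Fin n,
      (X k : MvPolynomial (Fin n) K) ∈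
        Submodule.span K (Set.range fun i => L i (js i)))
    (hLgen : ∀ k : ℕ, k ≤ n → ∀ js : Fin n → ℕ, ∀ v : Fin n,
      (X v : MvPolynomial (Fin n) K) ∈
        Submodule.span K ({p | ∃ i : Fin n, (i : ℕ) < k ∧ p = L i (js i)} ∪
          {p | ∃ i : Fin n, k ≤ (i : ℕ) ∧ p = X i}))
    (I : Ideal (MvPolynomial (Fin n) K)) (S : Set (Fin n →₀ ℕ))
    (hI : I = Ideal.span ((fun d => monomial d (1 : K)) '' S))
    (hss : ∀ d : Fin n →₀ ℕ, monomial d (1 : K) ∈ I →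
      ∀ i j : Fin n, i ≤ j → d j ≠ 0 →
        monomial (d - Finsupp.single j 1 + Finsupp.single i 1) (1 : K) ∈ I)
    (J : Ideal (MvPolynomial (Fin n) K))
    (hJ : J = Ideal.span (distr n K L '' I)) :
    Ideal.span {p | ∃ f ∈ J, f ≠ 0 ∧ ∃ d : Fin n →₀ ℕ, p = monomial d (1 : K) ∧
      coeff d f ≠ 0 ∧ ∀ e : Fin n →₀ ℕ, coeff e f ≠ 0 → e = d ∨ drlLT n e d} = I := by
  classical
  have hmemI : ∀ m : Fin n →₀ ℕ, (monomial m (1:K) ∈ I ↔ ∃ s ∈ S, s ≤ m) := by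
    intro m; rw [hI]; exact monomial_mem_monomialIdeal_iff S m
  have hfI : ∀ f ∈ I, ∀ e ∈ f.support, ∃ s ∈ S, s ≤ e := by
    intro f hf; rw [hI] at hf; exact (mem_monomialIdeal_iff S f).mp hf
  have hssS : ∀ e : Fin n →₀ ℕ, (∃ s ∈ S, s ≤ e) → ∀ i j : Fin n, i ≤ j → (j:ℕ) < n →
      e j ≠ 0 → (∃ s ∈ S, s ≤ e - Finsupp.single j 1 + Finsupp.single i 1) := by
    intro e he i j hij _ hej
    exact (hmemI _).mp (hss e ((hmemI e).mpr he) i j hij hej)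
  have htriv : ∀ (e : Fin n →₀ ℕ), ∀ v : Fin n, n ≤ ↑v → e v = 0 :=
    fun e v hv => absurd v.isLt (not_lt.mpr hv)
  set V : Submodule K (MvPolynomial (Fin n) K) := Submodule.span K
    {p | ∃ e : Fin n →₀ ℕ, (∃ s ∈ S, s ≤ e) ∧ p = distrMon n K L e} with hV
  have hXmul : ∀ (i : Fin n) (v : MvPolynomial (Fin n) K), v ∈ V → X i * v ∈ V := by
    intro i v hv
    induction hv using Submodule.span_induction with
    | mem x hx =>
      obtain ⟨e, heS, rfl⟩ := hx
      have hXi := hLspan (fun w => e w + 1) i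
      have h1 := Submodule.mem_map_of_mem
        (f := LinearMap.mulRight K (distrMon n K L e)) hXi
      rw [Submodule.map_span] at h1
      have h3 : X i * distrMon n K L e =
          LinearMap.mulRight K (distrMon n K L e) (X i) := by
        rw [LinearMap.mulRight_apply]
      rw [h3]
      refine Submodule.span_le.mpr ?_ h1
      rintro x ⟨y, ⟨w, rfl⟩, rfl⟩
      show LinearMap.mulRight K (distrMon n K L e) (L w (e w + 1)) ∈ V
      rw [LinearMap.mulRight_apply, ← distrMon_add_single]
      apply Submodule.subset_span
      obtain ⟨s, hsS, hse⟩ := heS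
      exact ⟨e + Finsupp.single w 1, ⟨s, hsS, le_trans hse (le_ext fun u => by
        simp only [Finsupp.add_apply]; omega)⟩, rfl⟩
    | zero => rw [mul_zero]; exact V.zero_mem
    | add x y _ _ hx hy => rw [mul_add]; exact V.add_mem hx hy
    | smul a x _ hx =>
      rw [MvPolynomial.smul_eq_C_mul, ← mul_assoc, mul_comm (X i), mul_assoc,
        ← MvPolynomial.smul_eq_C_mul]
      exact V.smul_mem a hx
  have hPmul : ∀ (p : MvPolynomial (Fin n) K), ∀ v ∈ V, p * v ∈ V := by
    intro p
    induction p using MvPolynomial.induction_on with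
    | C a => intro v hv; rw [← MvPolynomial.smul_eq_C_mul]; exact V.smul_mem a hv
    | add p q hp hq => intro v hv; rw [add_mul]; exact V.add_mem (hp v hv) (hq v hv)
    | mul_X p i hp =>
      intro v hv
      rw [mul_assoc]
      exact hp _ (hXmul i v hv)
  have hVI : (J : Set (MvPolynomial (Fin n) K)) = ↑V := by
    apply Set.Subset.antisymm
    · intro x hx
      have hx' : x ∈ J := hx
      rw [hJ] at hx'
      rw [SetLike.mem_coe]
      clear hx
      induction hx' using Submodule.span_induction with
      | mem x hx =>
        obtain ⟨f, hfI', rfl⟩ := hx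
        rw [distr]
        apply Submodule.sum_mem
        intro e he
        exact V.smul_mem _ (Submodule.subset_span ⟨e, hfI f hfI' e he, rfl⟩)
      | zero => exact V.zero_mem
      | add x y _ _ hx hy => exact V.add_mem hx hy
      | smul a x _ hx =>
        rw [smul_eq_mul]
        exact hPmul a x hx
    · have hsub : {p | ∃ e : Fin n →₀ ℕ, (∃ s ∈ S, s ≤ e) ∧ p = distrMon n K L e} ⊆
          (Submodule.restrictScalars K J : Set (MvPolynomial (Fin n) K)) := by
        rintro p ⟨e, heS, rfl⟩
        show distrMon n K L e ∈ J
        rw [hJ]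
        apply Ideal.subset_span
        exact ⟨monomial e (1:K), (hmemI e).mpr heS, distr_monomial L e⟩
      intro x hx
      exact Submodule.span_le.mpr hsub hx
  have hgrade : ∀ (dd : ℕ), ∀ f ∈ V, (homogeneousComponent dd) f ∈ Submodule.span K
      {p | ∃ e : Fin n →₀ ℕ, (∃ s ∈ S, s ≤ e) ∧ (∀ v : Fin n, n ≤ ↑v → e v = 0) ∧
        degE e = dd ∧ p = distrMon n K L e} := by
    intro dd f hf
    rw [hV] at hf
    have h1 := Submodule.mem_map_of_mem
      (f := (homogeneousComponent dd : MvPolynomial (Fin n) K →ₗ[K] MvPolynomial (Fin n) K)) hf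
    rw [Submodule.map_span] at h1
    refine Submodule.span_le.mpr ?_ h1
    rintro x ⟨y, ⟨e, heS, rfl⟩, rfl⟩
    show (homogeneousComponent dd) (distrMon n K L e) ∈ _
    have hhom := distrMon_isHomogeneous L e (fun i _ j => hLhom i j)
    rw [hc_homog hhom dd]
    by_cases hde : degE e = dd
    · rw [if_pos hde]
      exact Submodule.subset_span ⟨e, heS, htriv e, hde, rfl⟩
    · rw [if_neg hde]
      exact Submodule.zero_mem _
  have hconstr : ∀ (m : Fin n →₀ ℕ), (∃ s ∈ S, s ≤ m) →
      ∃ f ∈ Submodule.span K {p | ∃ e : Fin n →₀ ℕ, (∃ s ∈ S, s ≤ e) ∧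
        (∀ v : Fin n, n ≤ ↑v → e v = 0) ∧ degE e = degE m ∧ p = distrMon n K L e},
        IsLM f m := by
    intro m hm
    exact constr (K := K) n le_rfl (degE m) L S m
      (fun s _ v hv => htriv s v hv) (fun i j _ => hLhom i j)
      (fun i j _ d0 _ v hv => htriv d0 v hv)
      (fun k' hk' js v _ => hLgen k' hk' js v)
      hssS hm (htriv m) rfl
  have hmain : ∀ (dd : ℕ) (h : MvPolynomial (Fin n) K),
      h ∈ Submodule.span K {p | ∃ e : Fin n →₀ ℕ, (∃ s ∈ S, s ≤ e) ∧
        (∀ v : Fin n, n ≤ ↑v → e v = 0) ∧ degE e = dd ∧ p = distrMon n K L e} →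
      h ≠ 0 → ∃ m, (∃ s ∈ S, s ≤ m) ∧ degE m = dd ∧ IsLM h m := by
    intro dd h hh hh0
    have hgB : {p | ∃ e : Fin n →₀ ℕ, (∃ s ∈ S, s ≤ e) ∧ (∀ v : Fin n, n ≤ ↑v → e v = 0) ∧
        degE e = dd ∧ p = distrMon n K L e} =
        (fun e => distrMon n K L e) '' {m | (∃ s ∈ S, s ≤ m) ∧ degE m = dd} := by
      ext p0
      constructor
      · rintro ⟨e, h1, _, h3, rfl⟩; exact ⟨e, ⟨h1, h3⟩, rfl⟩
      · rintro ⟨e, ⟨h1, h3⟩, rfl⟩; exact ⟨e, h1, htriv e, h3, rfl⟩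
    rw [hgB] at hh
    obtain ⟨m, hmB, hmlm⟩ := gauss dd (fun e => distrMon n K L e)
      {m | (∃ s ∈ S, s ≤ m) ∧ degE m = dd}
      ((finite_degE dd).subset (fun m hm => hm.2))
      (fun m hm => hm.2)
      (fun m hm => by
        obtain ⟨f, hf1, hf2⟩ := hconstr m hm.1
        refine ⟨f, ?_, hf2⟩
        rw [← hgB]
        rw [hm.2] at hf1
        exact hf1)
      h hh hh0
    exact ⟨m, hmB.1, hmB.2, hmlm⟩
  apply le_antisymm
  · apply Ideal.span_le.mpr
    rintro p ⟨f, hfJ, hf0, t, rfl, hct, hmax⟩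
    have hfV : f ∈ V := by
      have h0 : f ∈ (J : Set (MvPolynomial (Fin n) K)) := hfJ
      rw [hVI] at h0
      exact h0
    have hh := hgrade (degE t) f hfV
    have hlm : IsLM ((homogeneousComponent (degE t)) f) t := by
      constructor
      · rw [coeff_homogeneousComponent, if_pos ((degE_eq_degree t).symm)]
        exact hct
      · intro e he
        rw [coeff_homogeneousComponent] at he
        by_cases hx : Finsupp.degree e = degE t
        · rw [if_pos hx] at he; exact hmax e he
        · rw [if_neg hx] at he; exact absurd rfl he
    have hne : (homogeneousComponent (degE t)) f ≠ 0 := by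
      intro h0; apply hlm.1; rw [h0, coeff_zero]
    obtain ⟨m, hmS, hmdeg, hmlm⟩ := hmain (degE t) _ hh hne
    have ht : t = m := IsLM.unique hlm hmlm
    rw [SetLike.mem_coe]
    exact (hmemI t).mpr (ht ▸ hmS)
  · rw [hI]
    apply Ideal.span_le.mpr
    rintro p ⟨s, hsS, rfl⟩
    obtain ⟨f, hf1, hf2⟩ := hconstr s ⟨s, hsS, le_rfl⟩
    have hfJ : f ∈ J := by
      have h2 : f ∈ V := by
        refine Submodule.span_mono ?_ hf1
        rintro p0 ⟨e, he1, _, _, rfl⟩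
        exact ⟨e, he1, rfl⟩
      have h3 : f ∈ (J : Set (MvPolynomial (Fin n) K)) := by
        rw [hVI]; exact h2
      exact h3
    rw [SetLike.mem_coe]
    apply Ideal.subset_span
    exact ⟨f, hfJ, (fun h0 => hf2.1 (by rw [h0, coeff_zero])), s, rfl, hf2.1, hf2.2⟩

end Assembly


/-- Main Theorem: if `L` is a sufficiently generic distraction matrix and
`I` is a strongly stable monomial ideal, then `in_DegRevLex(D_L(I)) = I`. -/
theorem inDRL_distr_stronglyStable (n : ℕ) (K : Type*) [Field K] [Infinite K]
    (L : Fin n → ℕ → MvPolynomial (Fin n) K) (hL : IsSuffGenericDistraction n K L)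
    (I : Ideal (MvPolynomial (Fin n) K)) (hmon : IsMonomialIdeal n K I)
    (hss : StronglyStableMoves n K I) :
    inDRL n K (distrIdeal n K L I) = I := by
  obtain ⟨⟨hLhom, hLspan, -⟩, hLgen⟩ := hL
  obtain ⟨S, hI⟩ := hmon
  exact main_thm L hLhom hLspan hLgen I S hI hss (distrIdeal n K L I) rfl
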